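/- arXiv:1305.0334 — 2 statements merged into one kernel-verified Lean document; each statement's English description precedes it below -/
import Mathlib

section
/- Let {f_k} be a frame for a separable Hilbert space H with frame operator S defined by S(f) = Σ_k ⟨f, f_k⟩ f_k. Then S is a positive, bounded, invertible linear operator from H onto H, and every f ∈ H satisfies f = Σ_k ⟨S⁻¹f, f_k⟩ f_k. -/
open scoped RealInnerProductSpace

/-! Pairing the expansion `S x = ∑ ⟪x, f k⟫ • f k` with `x` gives `⟪S x, x⟫ = ∑ ⟪x, f k⟫ ^ 2`, so
the lower frame bound says that `S` is coercive. By Lax–Milgram a coercive operator on a Hilbert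
space is a topological isomorphism, and applying the expansion to `S⁻¹ x` gives the
reconstruction formula. -/

theorem hasSum_inner_sq_of_hasSum_smul {ι H : Type*} [NormedAddCommGroup H]
    [InnerProductSpace ℝ H] {f : ι → H} {S : H →L[ℝ] H}
    (hS : ∀ x : H, HasSum (fun k => ⟪x, f k⟫ • f k) (S x)) (x : H) :
    HasSum (fun k => ⟪x, f k⟫ ^ 2) ⟪S x, x⟫ := by
  simpa only [innerSL_apply_apply, real_inner_smul_right, sq, real_inner_comm x] using
    (hS x).mapL (innerSL ℝ x)

section Coercive

variable {V : Type*} [NormedAddCommGroup V] [InnerProductSpace ℝ V]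

theorem isCoercive_innerSL_comp {S : V →L[ℝ] V} {A : ℝ} (hA : 0 < A)
    (hS : ∀ x, A * ‖x‖ ^ 2 ≤ ⟪S x, x⟫) : IsCoercive ((innerSL ℝ).comp S) :=
  ⟨A, hA, fun x => by
    simpa only [ContinuousLinearMap.comp_apply, innerSL_apply_apply, mul_assoc, ← sq] using hS x⟩

theorem exists_continuousLinearEquiv_eq_of_coercive [CompleteSpace V] {S : V →L[ℝ] V} {A : ℝ}
    (hA : 0 < A) (hS : ∀ x, A * ‖x‖ ^ 2 ≤ ⟪S x, x⟫) :
    ∃ e : V ≃L[ℝ] V, ⇑e = S := by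
  let coercive := isCoercive_innerSL_comp hA hS
  refine ⟨coercive.continuousLinearEquivOfBilin, funext fun v => ?_⟩
  exact (coercive.unique_continuousLinearEquivOfBilin fun w => rfl).symm

end Coercive

theorem frame_operator_positive_invertible_and_reconstruction_general
    {H : Type*} [NormedAddCommGroup H] [InnerProductSpace ℝ H] [CompleteSpace H]
    (f : ℕ → H) (A B : ℝ) (hA : 0 < A)
    (hframe : ∀ x : H,
      A * ‖x‖ ^ 2 ≤ ∑' k, ⟪x, f k⟫ ^ 2 ∧ ∑' k, ⟪x, f k⟫ ^ 2 ≤ B * ‖x‖ ^ 2)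
    (S : H →L[ℝ] H)
    (hS : ∀ x : H, HasSum (fun k => ⟪x, f k⟫ • f k) (S x)) :
    (∀ x : H, 0 ≤ ⟪S x, x⟫) ∧
      ∃ Sinv : H →L[ℝ] H, (∀ x, Sinv (S x) = x) ∧ (∀ x, S (Sinv x) = x) ∧
        ∀ x : H, HasSum (fun k => ⟪Sinv x, f k⟫ • f k) x := by
  have hsq := hasSum_inner_sq_of_hasSum_smul hS
  have hcoercive : ∀ x, A * ‖x‖ ^ 2 ≤ ⟪S x, x⟫ := fun x =>
    (hsq x).tsum_eq ▸ (hframe x).1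
  obtain ⟨e, he⟩ := exists_continuousLinearEquiv_eq_of_coercive hA hcoercive
  have hSinv : ∀ x, S (e.symm x) = x := fun x => he ▸ e.apply_symm_apply x
  refine ⟨fun x => (hsq x).nonneg fun k => sq_nonneg _, e.symm, fun x => ?_, hSinv,
    fun x => by simpa only [ContinuousLinearEquiv.coe_coe, hSinv] using hS (e.symm x)⟩
  simpa only [ContinuousLinearEquiv.coe_coe, ← he] using e.symm_apply_apply x

/-- Let `{f k}` be a frame for a separable Hilbert space `H` with bounds
`A, B > 0`, and let `S` be the associated frame operator,
`S x = Σ_k ⟪x, f k⟫ • f k`.  Then `S` is positive and invertible, and every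
`x ∈ H` satisfies the reconstruction formula `x = Σ_k ⟪S⁻¹ x, f k⟫ • f k`. -/
theorem frame_operator_positive_invertible_and_reconstruction
    {H : Type*} [NormedAddCommGroup H] [InnerProductSpace ℝ H] [CompleteSpace H]
    [TopologicalSpace.SeparableSpace H]
    (f : ℕ → H) (A B : ℝ) (hA : 0 < A) (hB : 0 < B)
    (hframe : ∀ x : H,
      A * ‖x‖ ^ 2 ≤ ∑' k, ⟪x, f k⟫ ^ 2 ∧ ∑' k, ⟪x, f k⟫ ^ 2 ≤ B * ‖x‖ ^ 2)
    (S : H →L[ℝ] H)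
    (hS : ∀ x : H, HasSum (fun k => ⟪x, f k⟫ • f k) (S x)) :
    (∀ x : H, 0 ≤ ⟪S x, x⟫) ∧
      ∃ Sinv : H →L[ℝ] H, (∀ x, Sinv (S x) = x) ∧ (∀ x, S (Sinv x) = x) ∧
        ∀ x : H, HasSum (fun k => ⟪Sinv x, f k⟫ • f k) x :=
  frame_operator_positive_invertible_and_reconstruction_general f A B hA hframe S hS
end

section
/- Let ({f_k}, {f_k*}) be a reconstruction system for a Banach space X, U = {(γ_i) : Σ_i γ_i f_i converges} with norm ‖(γ_i)‖_U = sup_k ‖Σ_{i=1}^k γ_i f_i‖. Then the map Γ : X → U, Γ(f) = (f_k*(f))_k, is a bounded linear isomorphism of X onto its range, and the map Θ : U → X, Θ((γ_i)) = Σ_i γ_i f_i, is a bounded linear surjection with Θ ∘ Γ = id_X. -/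
open Filter Topology

/-- A reconstruction system for `X`. -/
def ReconSystem {X : Type*} [NormedAddCommGroup X] [NormedSpace ℝ X]
    (f : ℕ → X) (F : ℕ → X →L[ℝ] ℝ) : Prop :=
  ∀ x : X, Tendsto (fun n => ∑ k ∈ Finset.range n, F k x • f k) atTop (𝓝 x)

/-- The set `U` of scalar sequences `γ` for which `Σ_i γ i • f i` converges. -/
def USet {X : Type*} [NormedAddCommGroup X] [NormedSpace ℝ X] (f : ℕ → X) :
    Set (ℕ → ℝ) :=
  {γ | ∃ x : X, Tendsto (fun n => ∑ i ∈ Finset.range n, γ i • f i) atTop (𝓝 x)}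

/-- The norm `‖γ‖_U = sup_k ‖Σ_{i ≤ k} γ i • f i‖` on `U`. -/
noncomputable def UNorm {X : Type*} [NormedAddCommGroup X] [NormedSpace ℝ X]
    (f : ℕ → X) (γ : ℕ → ℝ) : ℝ :=
  ⨆ k : ℕ, ‖∑ i ∈ Finset.range (k + 1), γ i • f i‖

/-!
The partial sum operators `S n x = Σ_{k ≤ n} F k x • f k` converge pointwise to the identity,
so they are pointwise bounded and, `X` being complete, uniformly bounded by Banach–Steinhaus;
that uniform bound is the boundedness of `Γ`. The norm of the limit of a convergent series is
bounded by the supremum of the norms of its partial sums, which gives both the boundedness of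
`Θ` and the lower bound `‖x‖ ≤ ‖Γ x‖_U`.
-/

section

variable {X : Type*} [NormedAddCommGroup X] [NormedSpace ℝ X] (f : ℕ → X)

lemma norm_le_UNorm_of_tendsto {γ : ℕ → ℝ} {x : X}
    (hx : Tendsto (fun n => ∑ i ∈ Finset.range n, γ i • f i) atTop (𝓝 x)) :
    ‖x‖ ≤ UNorm f γ := by
  have hnorm : Tendsto (fun k : ℕ => ‖∑ i ∈ Finset.range (k + 1), γ i • f i‖) atTop (𝓝 ‖x‖) :=
    (hx.comp (tendsto_add_atTop_nat 1)).norm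
  exact le_of_tendsto hnorm (Eventually.of_forall fun k => le_ciSup hnorm.bddAbove_range k)

noncomputable def partialSumCLM (F : ℕ → X →L[ℝ] ℝ) (n : ℕ) : X →L[ℝ] X :=
  ∑ k ∈ Finset.range (n + 1), (F k).smulRight (f k)

lemma partialSumCLM_apply (F : ℕ → X →L[ℝ] ℝ) (n : ℕ) (x : X) :
    partialSumCLM f F n x = ∑ k ∈ Finset.range (n + 1), F k x • f k := by
  simp [partialSumCLM]

lemma ReconSystem.exists_norm_partialSumCLM_le [CompleteSpace X] {F : ℕ → X →L[ℝ] ℝ}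
    (hrec : ReconSystem f F) : ∃ C, ∀ n, ‖partialSumCLM f F n‖ ≤ C := by
  have hbdd : ∀ x : X, ∃ C, ∀ n, ‖partialSumCLM f F n x‖ ≤ C := by
    intro x
    have hnorm : Tendsto (fun n => ‖partialSumCLM f F n x‖) atTop (𝓝 ‖x‖) := by
      simp only [partialSumCLM_apply]
      exact ((hrec x).comp (tendsto_add_atTop_nat 1)).norm
    obtain ⟨C, hC⟩ := hnorm.bddAbove_range
    exact ⟨C, fun n => hC ⟨n, rfl⟩⟩
  exact banach_steinhaus hbdd

lemma ReconSystem.exists_UNorm_le [CompleteSpace X] {F : ℕ → X →L[ℝ] ℝ}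
    (hrec : ReconSystem f F) : ∃ C > (0 : ℝ), ∀ x : X, UNorm f (fun k => F k x) ≤ C * ‖x‖ := by
  obtain ⟨C, hC⟩ := hrec.exists_norm_partialSumCLM_le
  refine ⟨max C 1, lt_max_of_lt_right one_pos, fun x => ciSup_le fun k => ?_⟩
  calc ‖∑ i ∈ Finset.range (k + 1), F i x • f i‖ = ‖partialSumCLM f F k x‖ := by
        rw [partialSumCLM_apply]
    _ ≤ ‖partialSumCLM f F k‖ * ‖x‖ := (partialSumCLM f F k).le_opNorm x
    _ ≤ max C 1 * ‖x‖ := by gcongr; exact (hC k).trans (le_max_left _ _)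

end

/-- For a reconstruction system `(f, F)`, the coefficient map
`Γ x = (F k x)ₖ` maps `X` into `U`, is linear, bounded and bounded below
(hence an isomorphism onto its range), while the summation map
`Θ : U → X` is bounded linear and onto, with `Θ ∘ Γ = id`. -/
theorem coefficient_map_isomorphism_and_summation_surjection
    {X : Type*} [NormedAddCommGroup X] [NormedSpace ℝ X] [CompleteSpace X]
    (f : ℕ → X) (F : ℕ → X →L[ℝ] ℝ) (hrec : ReconSystem f F) :
    (∀ x : X, (fun k => F k x) ∈ USet f) ∧
    (∀ x y : X, (fun k => F k (x + y)) = (fun k => F k x) + fun k => F k y) ∧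
    (∀ (c : ℝ) (x : X), (fun k => F k (c • x)) = c • fun k => F k x) ∧
    (∃ C > (0 : ℝ), ∀ x : X, UNorm f (fun k => F k x) ≤ C * ‖x‖) ∧
    (∃ c > (0 : ℝ), ∀ x : X, c * ‖x‖ ≤ UNorm f (fun k => F k x)) ∧
    (∀ γ ∈ USet f, ∀ x : X,
      Tendsto (fun n => ∑ i ∈ Finset.range n, γ i • f i) atTop (𝓝 x) →
        ‖x‖ ≤ UNorm f γ) ∧
    (∀ x : X,
      Tendsto (fun n => ∑ i ∈ Finset.range n, F i x • f i) atTop (𝓝 x)) :=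
  ⟨fun x => ⟨x, hrec x⟩,
    fun x y => funext fun k => map_add (F k) x y,
    fun c x => funext fun k => map_smul (F k) c x,
    hrec.exists_UNorm_le f,
    ⟨1, one_pos, fun x => (one_mul ‖x‖).trans_le (norm_le_UNorm_of_tendsto f (hrec x))⟩,
    fun _ _ _ hx => norm_le_UNorm_of_tendsto f hx,
    hrec⟩
end
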